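/- arXiv:2212.04963 — 2 statements merged into one kernel-verified Lean document; each statement's English description precedes it below -/
import Mathlib

section
/- Every map q : H → ℂˣ of the form q(k) = ω^{k²} for ω a complex number with ω^{2n} = 1 (and ω^{n²}=1) is a well-defined quadratic form on H = ℤ/n, and conversely every quadratic form on ℤ/n is of this form. This establishes a bijection between quadratic forms on ℤ/n valued in ℂˣ and n-th roots of unity when n is odd, and 2n-th roots of unity when n is even. -/
/-!
On `ℤ` the quadratic forms are exactly `k ↦ ω^{k²}`, with polarisation `ω^{2kl}`. Such a form
descends to `ℤ/n` iff `ω^{(k+nc)²} = ω^{k²}` for all `k, c`, i.e. iff `ω^{2n} = ω^{n²} = 1`.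
Conversely a quadratic form on `ℤ/n` is determined by `ω = q(1)`, and `q(0) = 1` forces
`ω^{n²} = 1` while `1 = polar(1, n·1) = polar(1, 1)^n = ω^{2n}`. Finally
`gcd(2n, n²) = n·gcd(2, n)` is `2n` or `n` according to the parity of `n`.
-/

/-- The polarisation form of a map `q : H → ℂˣ`. -/
def polar {H : Type} [AddCommGroup H] (q : H → ℂˣ) (x y : H) : ℂˣ :=
  q (x + y) * (q x)⁻¹ * (q y)⁻¹

/-- A quadratic form on an abelian group `H`, valued in `ℂˣ`:
`q(m·x) = q(x)^{m²}` and the polarisation form is bilinear. -/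
def IsQuadForm {H : Type} [AddCommGroup H] (q : H → ℂˣ) : Prop :=
  (∀ (m : ℤ) (x : H), q (m • x) = q x ^ (m ^ 2)) ∧
  (∀ x y z : H, polar q (x + y) z = polar q x z * polar q y z) ∧
  (∀ x y z : H, polar q x (y + z) = polar q x y * polar q x z)

theorem Nat.gcd_two_mul_sq (n : ℕ) : (2 * n).gcd (n ^ 2) = if Even n then 2 * n else n := by
  rw [sq, mul_comm 2, Nat.gcd_mul_left]
  split_ifs with hn
  · rw [Nat.gcd_eq_left (even_iff_two_dvd.mp hn)]
  · rw [Nat.coprime_two_left.mpr (Nat.not_even_iff_odd.mp hn), mul_one]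

theorem pow_two_mul_eq_one_and_pow_sq_eq_one_iff {M : Type*} [Monoid M] (x : M) (n : ℕ) :
    x ^ (2 * n) = 1 ∧ x ^ (n ^ 2) = 1 ↔ x ^ (if Even n then 2 * n else n) = 1 := by
  simp only [← orderOf_dvd_iff_pow_eq_one, ← Nat.dvd_gcd_iff, Nat.gcd_two_mul_sq]

section RootsOfUnity

variable {G : Type*} [Group G] {n : ℕ} {ω : G}

theorem zpow_sq_eq_zpow_sq_of_intCast_eq (h2n : ω ^ (2 * n) = 1) (hn2 : ω ^ (n ^ 2) = 1)
    {a b : ℤ} (h : (a : ZMod n) = b) : ω ^ (a ^ 2) = ω ^ (b ^ 2) := by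
  obtain ⟨c, hc⟩ := (ZMod.intCast_eq_intCast_iff_dvd_sub a b n).mp h
  have hb : b ^ 2 = a ^ 2 + ((2 * n : ℕ) : ℤ) * (a * c) + ((n ^ 2 : ℕ) : ℤ) * c ^ 2 := by
    rw [show b = a + n * c by omega]; push_cast; ring
  rw [hb, zpow_add, zpow_add, zpow_mul, zpow_natCast, h2n, one_zpow, zpow_mul, zpow_natCast,
    hn2, one_zpow, mul_one, mul_one]

theorem pow_val_intCast_sq (h2n : ω ^ (2 * n) = 1) (hn2 : ω ^ (n ^ 2) = 1) (k : ℤ) :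
    ω ^ ((k : ZMod n).val ^ 2) = ω ^ (k ^ 2) := by
  rcases n.eq_zero_or_pos with rfl | hn
  · -- `ZMod 0 = ℤ`, where `val` is `Int.natAbs`
    rw [← zpow_natCast]; push_cast
    exact congrArg (ω ^ ·) (Int.natAbs_sq k)
  · have : NeZero n := ⟨hn.ne'⟩
    rw [← zpow_natCast]; push_cast
    exact zpow_sq_eq_zpow_sq_of_intCast_eq h2n hn2 (by simp)

end RootsOfUnity

section QuadForm

variable {H : Type} [AddCommGroup H]

theorem polar_comp {G : Type} [AddCommGroup G] (q : H → ℂˣ) (f : G →+ H) (a b : G) :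
    polar (q ∘ f) a b = polar q (f a) (f b) := by
  simp only [polar, Function.comp_apply, map_add]

theorem IsQuadForm.of_comp_surjective {G : Type} [AddCommGroup G] {q : H → ℂˣ} {f : G →+ H}
    (hf : Function.Surjective f) (hq : IsQuadForm (q ∘ f)) : IsQuadForm q := by
  obtain ⟨hsmul, hleft, hright⟩ := hq
  refine ⟨fun m => hf.forall.mpr fun a => ?_, hf.forall₃.mpr fun a b c => ?_,
    hf.forall₃.mpr fun a b c => ?_⟩
  · simpa only [Function.comp_apply, map_zsmul] using hsmul m a
  · simpa only [polar_comp, map_add] using hleft a b c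
  · simpa only [polar_comp, map_add] using hright a b c

theorem polar_zpow_sq (ω : ℂˣ) (k l : ℤ) :
    polar (fun k : ℤ => ω ^ (k ^ 2)) k l = ω ^ (2 * k * l) := by
  simp only [polar, ← zpow_neg, ← zpow_add]
  ring_nf

theorem isQuadForm_zpow_sq (ω : ℂˣ) : IsQuadForm (fun k : ℤ => ω ^ (k ^ 2)) := by
  refine ⟨fun m k => ?_, fun k l j => ?_, fun k l j => ?_⟩
  · rw [smul_eq_mul, ← zpow_mul]; ring_nf
  · simp only [polar_zpow_sq, ← zpow_add]; ring_nf
  · simp only [polar_zpow_sq, ← zpow_add]; ring_nf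

theorem isQuadForm_pow_val_sq {n : ℕ} {ω : ℂˣ} (h2n : ω ^ (2 * n) = 1) (hn2 : ω ^ (n ^ 2) = 1) :
    IsQuadForm (fun x : ZMod n => ω ^ (x.val ^ 2)) := by
  refine IsQuadForm.of_comp_surjective (f := Int.castAddHom (ZMod n)) ZMod.intCast_surjective ?_
  convert isQuadForm_zpow_sq ω using 1
  funext k
  exact pow_val_intCast_sq h2n hn2 k

namespace IsQuadForm

variable {q : H → ℂˣ} (hq : IsQuadForm q)
include hq

theorem map_zero : q 0 = 1 := by
  simpa using hq.1 0 0

theorem polar_self (x : H) : polar q x x = q x ^ 2 := by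
  have h := hq.1 2 x
  rw [two_zsmul] at h
  rw [polar, h]
  group

theorem polar_zero_right (x : H) : polar q x 0 = 1 := by
  simp [polar, hq.map_zero]

theorem polar_nsmul_right (x y : H) (m : ℕ) : polar q x (m • y) = polar q x y ^ m := by
  induction m with
  | zero => rw [zero_smul, hq.polar_zero_right, pow_zero]
  | succ m ih => rw [succ_nsmul, hq.2.2, ih, pow_succ]

theorem pow_two_mul_eq_one_of_nsmul_eq_zero {n : ℕ} {x : H} (hx : n • x = 0) :
    q x ^ (2 * n) = 1 := by
  rw [pow_mul, ← hq.polar_self, ← hq.polar_nsmul_right, hx, hq.polar_zero_right]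

theorem pow_sq_eq_one_of_nsmul_eq_zero {n : ℕ} {x : H} (hx : n • x = 0) :
    q x ^ (n ^ 2) = 1 := by
  have h := hq.1 n x
  rw [natCast_zsmul, hx, hq.map_zero] at h
  exact_mod_cast h.symm

end IsQuadForm

theorem IsQuadForm.apply_intCast {n : ℕ} {q : ZMod n → ℂˣ} (hq : IsQuadForm q) (k : ℤ) :
    q k = q 1 ^ (k ^ 2) := by
  simpa using hq.1 k 1

theorem IsQuadForm.pow_two_mul_apply_one_eq_one {n : ℕ} {q : ZMod n → ℂˣ} (hq : IsQuadForm q) :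
    q 1 ^ (2 * n) = 1 :=
  hq.pow_two_mul_eq_one_of_nsmul_eq_zero (by simp)

theorem IsQuadForm.pow_sq_apply_one_eq_one {n : ℕ} {q : ZMod n → ℂˣ} (hq : IsQuadForm q) :
    q 1 ^ (n ^ 2) = 1 :=
  hq.pow_sq_eq_one_of_nsmul_eq_zero (by simp)

end QuadForm

def quadFormEquivRootsOfUnity (n : ℕ) :
    {q : ZMod n → ℂˣ // IsQuadForm q} ≃ {ω : ℂˣ // ω ^ (if Even n then 2 * n else n) = 1} where
  toFun q := ⟨q.1 1, (pow_two_mul_eq_one_and_pow_sq_eq_one_iff _ n).mp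
    ⟨q.2.pow_two_mul_apply_one_eq_one, q.2.pow_sq_apply_one_eq_one⟩⟩
  invFun ω :=
    have hω := (pow_two_mul_eq_one_and_pow_sq_eq_one_iff ω.1 n).mpr ω.2
    ⟨fun x => ω.1 ^ (x.val ^ 2), isQuadForm_pow_val_sq hω.1 hω.2⟩
  left_inv q := Subtype.ext <| funext fun x => by
    obtain ⟨k, rfl⟩ := ZMod.intCast_surjective x
    exact (pow_val_intCast_sq q.2.pow_two_mul_apply_one_eq_one q.2.pow_sq_apply_one_eq_one k).trans
      (q.2.apply_intCast k).symm
  right_inv ω := Subtype.ext <| by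
    have hω := (pow_two_mul_eq_one_and_pow_sq_eq_one_iff ω.1 n).mpr ω.2
    simpa using pow_val_intCast_sq hω.1 hω.2 1

theorem stmt_11_general (n : ℕ) :
    -- well-definedness and quadraticity
    (∀ ω : ℂˣ, ω ^ (2 * n) = 1 → ω ^ (n ^ 2) = 1 →
      IsQuadForm (fun x : ZMod n => ω ^ (x.val ^ 2)) ∧
      ∀ k : ℤ, (fun x : ZMod n => ω ^ (x.val ^ 2)) ((k : ZMod n)) = ω ^ (k ^ 2)) ∧
    -- every quadratic form arises this way
    (∀ q : ZMod n → ℂˣ, IsQuadForm q →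
      ∃ ω : ℂˣ, ω ^ (2 * n) = 1 ∧ ω ^ (n ^ 2) = 1 ∧
        ∀ k : ℤ, q ((k : ZMod n)) = ω ^ (k ^ 2)) ∧
    -- the bijection with roots of unity
    ∃ e : {q : ZMod n → ℂˣ // IsQuadForm q} ≃
        {ω : ℂˣ // ω ^ (if Even n then 2 * n else n) = 1},
      ∀ q : {q : ZMod n → ℂˣ // IsQuadForm q}, ((e q : ℂˣ)) = q.val 1 :=
  ⟨fun _ h2n hn2 => ⟨isQuadForm_pow_val_sq h2n hn2, pow_val_intCast_sq h2n hn2⟩,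
    fun q hq => ⟨q 1, hq.pow_two_mul_apply_one_eq_one, hq.pow_sq_apply_one_eq_one,
      hq.apply_intCast⟩,
    quadFormEquivRootsOfUnity n, fun _ => rfl⟩

/-- Every map `q(k) = ω^{k²}` with `ω^{2n} = 1` (and `ω^{n²} = 1`) is a
well-defined quadratic form on `ℤ/n`; conversely every quadratic form on
`ℤ/n` is of this form.  This gives a bijection between quadratic forms on
`ℤ/n` and `n`-th roots of unity for `n` odd, resp. `2n`-th roots of unity for
`n` even. -/
theorem stmt_11 (n : ℕ) (hn : 0 < n) :
    -- well-definedness and quadraticity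
    (∀ ω : ℂˣ, ω ^ (2 * n) = 1 → ω ^ (n ^ 2) = 1 →
      IsQuadForm (fun x : ZMod n => ω ^ (x.val ^ 2)) ∧
      ∀ k : ℤ, (fun x : ZMod n => ω ^ (x.val ^ 2)) ((k : ZMod n)) = ω ^ (k ^ 2)) ∧
    -- every quadratic form arises this way
    (∀ q : ZMod n → ℂˣ, IsQuadForm q →
      ∃ ω : ℂˣ, ω ^ (2 * n) = 1 ∧ ω ^ (n ^ 2) = 1 ∧
        ∀ k : ℤ, q ((k : ZMod n)) = ω ^ (k ^ 2)) ∧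
    -- the bijection with roots of unity
    ∃ e : {q : ZMod n → ℂˣ // IsQuadForm q} ≃
        {ω : ℂˣ // ω ^ (if Even n then 2 * n else n) = 1},
      ∀ q : {q : ZMod n → ℂˣ // IsQuadForm q}, ((e q : ℂˣ)) = q.val 1 :=
  stmt_11_general n
end

section
/- Let (M, x₀, μ) be a smooth partial monoid: μ : M × M → M is a smooth map defined on a neighbourhood of (x₀,x₀), associative where defined, with μ(x,x₀) = μ(x₀,x) = x. Then M is group-like near x₀: there exists a smooth map s : V → M on a neighbourhood V of x₀ with μ(s(x),x) = μ(x,s(x)) = x₀ for all x ∈ V. -/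
/-!
In a chart at `x₀`, with `e₀` the image of `x₀`, the multiplication becomes a smooth map `f` with
`f (e₀, v) = v` near `e₀`; so its partial derivative in the second variable at `(e₀, e₀)` is the
identity, and the implicit function theorem yields a smooth `ψ` with `f (u, ψ u) = e₀`, i.e. a
smooth right inverse `s`. Smoothness of class `C^∞` at a single point does not propagate to a
neighbourhood, so smoothness of `ψ` near `e₀` comes from applying the implicit function theorem
again at each nearby point of its graph, together with local uniqueness of implicit functions.
A right inverse is a left inverse: writing `y = s x` and `z = s y`,
`y x = (y x)(y z) = ((y x) y) z = (y (x y)) z = y z = x₀`, all products being defined for `x`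
near `x₀`.
-/

open Filter Function
open scoped Topology Manifold ContDiff

section ImplicitFunction

variable {𝕜 : Type*} [RCLike 𝕜]
  {E₁ : Type*} [NormedAddCommGroup E₁] [NormedSpace 𝕜 E₁]
  {E₂ : Type*} [NormedAddCommGroup E₂] [NormedSpace 𝕜 E₂]
  {F : Type*} [NormedAddCommGroup F] [NormedSpace 𝕜 F]
  {f : E₁ × E₂ → F} {u : E₁ × E₂} {n : ℕ∞ω}

theorem ContDiffAt.eventually_isInvertible_fderiv_comp_inr [CompleteSpace E₂]
    (cdf : ContDiffAt 𝕜 n f u) (pn : n ≠ 0) (if₂ : (fderiv 𝕜 f u ∘L .inr 𝕜 E₁ E₂).IsInvertible) :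
    ∀ᶠ v in 𝓝 u, (fderiv 𝕜 f v ∘L .inr 𝕜 E₁ E₂).IsInvertible :=
  ((cdf.continuousAt_fderiv pn).clm_comp continuousAt_const).eventually_mem
    (ContinuousLinearEquiv.isOpen.mem_nhds if₂)

theorem ContDiffAt.tendsto_graph_implicitFunction [CompleteSpace E₁] [CompleteSpace E₂]
    [CompleteSpace F] (cdf : ContDiffAt 𝕜 n f u) (pn : n ≠ 0)
    (if₂ : (fderiv 𝕜 f u ∘L .inr 𝕜 E₁ E₂).IsInvertible) :
    Tendsto (fun x ↦ (x, cdf.implicitFunction pn if₂ x)) (𝓝 u.1) (𝓝 u) := by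
  have h := (continuousAt_id.prodMk (cdf.contDiffAt_implicitFunction pn if₂).continuousAt).tendsto
  rwa [id, cdf.implicitFunction_apply_self] at h

theorem eventually_contDiffAt_implicitFunction [CompleteSpace E₁] [CompleteSpace E₂]
    [CompleteSpace F] (hf : ∀ᶠ v in 𝓝 u, ContDiffAt 𝕜 n f v)
    (pn : n ≠ 0) (if₂ : (fderiv 𝕜 f u ∘L .inr 𝕜 E₁ E₂).IsInvertible) :
    ∀ᶠ x in 𝓝 u.1, ContDiffAt 𝕜 n (hf.self_of_nhds.implicitFunction pn if₂) x := by
  set ψ := hf.self_of_nhds.implicitFunction pn if₂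
  have hgraph := hf.self_of_nhds.tendsto_graph_implicitFunction pn if₂
  have huniq := (hf.self_of_nhds.eventually_apply_eq_iff_implicitFunction pn if₂).eventually_nhds
  have hinv := hf.self_of_nhds.eventually_isInvertible_fderiv_comp_inr pn if₂
  filter_upwards [hgraph.eventually (hf.and hinv), hgraph.eventually huniq,
    hf.self_of_nhds.eventually_apply_implicitFunction pn if₂]
    with x ⟨hcd, hinvx⟩ hx hfx
  -- by local uniqueness, the implicit function based at `(x, ψ x)` agrees with `ψ` near `x`
  have hψx : ψ =ᶠ[𝓝 x] hcd.implicitFunction pn hinvx := by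
    filter_upwards [(hcd.tendsto_graph_implicitFunction pn hinvx).eventually hx,
      hcd.eventually_apply_implicitFunction pn hinvx] with y hy hfy
    exact hy.1 (hfy.trans hfx)
  exact (hcd.contDiffAt_implicitFunction pn hinvx).congr_of_eventuallyEq hψx

theorem fderiv_comp_inr_eq_id {f : E₁ × E₂ → E₂} (hf : DifferentiableAt 𝕜 f u)
    (h : ∀ᶠ v in 𝓝 u.2, f (u.1, v) = v) :
    fderiv 𝕜 f u ∘L .inr 𝕜 E₁ E₂ = .id 𝕜 E₂ :=
  (hf.hasFDerivAt.comp u.2 (hasFDerivAt_prodMk_right u.1 u.2)).unique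
    ((hasFDerivAt_id u.2).congr_of_eventuallyEq h)

end ImplicitFunction

section Charts

variable {𝕜 : Type*} [NontriviallyNormedField 𝕜] {n : ℕ∞ω}
  {E : Type*} [NormedAddCommGroup E] [NormedSpace 𝕜 E]
  {H : Type*} [TopologicalSpace H] {I : ModelWithCorners 𝕜 E H}
  {M : Type*} [TopologicalSpace M] [ChartedSpace H M]
  {E' : Type*} [NormedAddCommGroup E'] [NormedSpace 𝕜 E']
  {H' : Type*} [TopologicalSpace H'] {I' : ModelWithCorners 𝕜 E' H'}
  {M' : Type*} [TopologicalSpace M'] [ChartedSpace H' M']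

theorem eventually_contDiffAt_writtenInExtChartAt [I.Boundaryless] [IsManifold I n M]
    [IsManifold I' n M'] {g : M → M'} {x : M} (hg : ∀ᶠ y in 𝓝 x, ContMDiffAt I I' n g y) :
    ∀ᶠ e in 𝓝 (extChartAt I x x), ContDiffAt 𝕜 n (writtenInExtChartAt I I' x g) e := by
  have hsymm : Tendsto (extChartAt I x).symm (𝓝 (extChartAt I x x)) (𝓝 x) := by
    simpa only [extChartAt_to_inv] using (continuousAt_extChartAt_symm (I := I) x).tendsto
  have hsrc : ∀ᶠ y in 𝓝 x, g y ∈ (chartAt H' (g x)).source :=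
    hg.self_of_nhds.continuousAt.preimage_mem_nhds (chart_source_mem_nhds H' (g x))
  filter_upwards [eventually_mem_nhds_iff.2 (extChartAt_target_mem_nhds (I := I) x),
    hsymm.eventually hg, hsymm.eventually hsrc] with e he hge hsrc
  rw [← contMDiffAt_iff_contDiffAt]
  exact (contMDiffAt_extChartAt' hsrc).comp e
    (hge.comp e ((contMDiffOn_extChartAt_symm x).contMDiffAt he))

theorem eventually_contMDiffAt_extChartAt_symm_comp [IsManifold I n M] [I'.Boundaryless]
    [IsManifold I' n M'] {ψ : E → E'} {x : M} {x' : M'}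
    (hψ : ∀ᶠ e in 𝓝 (extChartAt I x x), ContDiffAt 𝕜 n ψ e)
    (hψx : ψ (extChartAt I x x) = extChartAt I' x' x') :
    ∀ᶠ y in 𝓝 x, ContMDiffAt I I' n ((extChartAt I' x').symm ∘ ψ ∘ extChartAt I x) y := by
  have hφ : Tendsto (extChartAt I x) (𝓝 x) (𝓝 (extChartAt I x x)) :=
    (continuousAt_extChartAt x).tendsto
  have htarget : ∀ᶠ e in 𝓝 (extChartAt I x x), (extChartAt I' x').target ∈ 𝓝 (ψ e) := by
    have hcont : Tendsto ψ (𝓝 (extChartAt I x x)) (𝓝 (extChartAt I' x' x')) := by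
      simpa only [hψx] using hψ.self_of_nhds.continuousAt.tendsto
    exact hcont.eventually (eventually_mem_nhds_iff.2 (extChartAt_target_mem_nhds x'))
  filter_upwards [chart_source_mem_nhds H x, hφ.eventually hψ, hφ.eventually htarget]
    with y hy hψy hty
  exact ((contMDiffOn_extChartAt_symm x').contMDiffAt hty).comp y
    ((contMDiffAt_iff_contDiffAt.2 hψy).comp y (contMDiffAt_extChartAt' hy))

end Charts

section PartialMonoid

variable {X : Type*} {μ : X × X → X} {U : Set (X × X)} {x₀ : X}

theorem mul_eq_unit_of_right_inverses {W : Set X} (hW : W ×ˢ W ⊆ U) (hx₀ : x₀ ∈ W)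
    (hunitr : ∀ x : X, (x, x₀) ∈ U → μ (x, x₀) = x)
    (hassoc : ∀ x y z : X, (x, y) ∈ U → (y, z) ∈ U →
      (μ (x, y), z) ∈ U → (x, μ (y, z)) ∈ U → μ (μ (x, y), z) = μ (x, μ (y, z)))
    {x y z : X} (hx : x ∈ W) (hy : y ∈ W) (hz : z ∈ W) (hyx : μ (y, x) ∈ W)
    (hxy : μ (x, y) = x₀) (hyz : μ (y, z) = x₀) : μ (y, x) = x₀ := by
  have hW' : ∀ {a b}, a ∈ W → b ∈ W → (a, b) ∈ U := fun ha hb ↦ hW ⟨ha, hb⟩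
  have hyxy : μ (μ (y, x), y) = y := by
    rw [hassoc y x y (hW' hy hx) (hW' hx hy) (hW' hyx hy) (by rw [hxy]; exact hW' hy hx₀), hxy,
      hunitr y (hW' hy hx₀)]
  calc μ (y, x) = μ (μ (y, x), μ (y, z)) := by rw [hyz, hunitr _ (hW' hyx hx₀)]
    _ = μ (μ (μ (y, x), y), z) :=
      (hassoc _ y z (hW' hyx hy) (hW' hy hz) (by rw [hyxy]; exact hW' hy hz)
        (by rw [hyz]; exact hW' hyx hx₀)).symm
    _ = x₀ := by rw [hyxy, hyz]

theorem eventually_left_inverse_of_right_inverse [TopologicalSpace X] (hU : U ∈ 𝓝 (x₀, x₀))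
    (hμ : ContinuousAt μ (x₀, x₀)) (hunit : μ (x₀, x₀) = x₀)
    (hunitr : ∀ x : X, (x, x₀) ∈ U → μ (x, x₀) = x)
    (hassoc : ∀ x y z : X, (x, y) ∈ U → (y, z) ∈ U →
      (μ (x, y), z) ∈ U → (x, μ (y, z)) ∈ U → μ (μ (x, y), z) = μ (x, μ (y, z)))
    {s : X → X} (hs : Tendsto s (𝓝 x₀) (𝓝 x₀)) (hright : ∀ᶠ x in 𝓝 x₀, μ (x, s x) = x₀) :
    ∀ᶠ x in 𝓝 x₀, (s x, x) ∈ U ∧ (x, s x) ∈ U ∧ μ (s x, x) = x₀ := by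
  obtain ⟨W, hW, hWU⟩ := mem_prod_self_iff.1 (nhds_prod_eq (x := x₀) (y := x₀) ▸ hU)
  have hleft : Tendsto (fun x ↦ μ (s x, x)) (𝓝 x₀) (𝓝 x₀) :=
    (hunit ▸ hμ.tendsto).comp (hs.prodMk_nhds tendsto_id)
  filter_upwards [hW, hs hW, (hs.comp hs) hW, hleft hW, hright, hs.eventually hright]
    with x hx hsx hssx hsxx hxsx hsssx
  exact ⟨hWU ⟨hsx, hx⟩, hWU ⟨hx, hsx⟩, mul_eq_unit_of_right_inverses hWU (mem_of_mem_nhds hW)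
    hunitr hassoc hx hsx hssx hsxx hxsx hsssx⟩

end PartialMonoid

section RightInverse

variable {𝕜 : Type*} [RCLike 𝕜] {n : ℕ∞ω}
  {E : Type*} [NormedAddCommGroup E] [NormedSpace 𝕜 E] [CompleteSpace E]
  {H : Type*} [TopologicalSpace H] {I : ModelWithCorners 𝕜 E H} [I.Boundaryless]
  {M : Type*} [TopologicalSpace M] [ChartedSpace H M] [IsManifold I n M]

theorem exists_contMDiffAt_right_inverse {x₀ : M} {U : Set (M × M)} (hU : U ∈ 𝓝 (x₀, x₀))
    {μ : M × M → M} (hμ : ContMDiffOn (I.prod I) I n μ U) (hn : n ≠ 0)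
    (hunitl : ∀ x : M, (x₀, x) ∈ U → μ (x₀, x) = x) :
    ∃ s : M → M, s x₀ = x₀ ∧ (∀ᶠ x in 𝓝 x₀, ContMDiffAt I I n s x) ∧
      ∀ᶠ x in 𝓝 x₀, μ (x, s x) = x₀ := by
  set φ := extChartAt I x₀
  have hμ₀ : μ (x₀, x₀) = x₀ := hunitl x₀ (mem_of_mem_nhds hU)
  set f := writtenInExtChartAt (I.prod I) I (x₀, x₀) μ
  have hf_apply (p : E × E) : f p = φ (μ (φ.symm p.1, φ.symm p.2)) := by
    simp only [f, writtenInExtChartAt, extChartAt_prod, comp_apply, hμ₀, PartialEquiv.prod_symm,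
      PartialEquiv.prod_coe, φ]
  have hf : ∀ᶠ p in 𝓝 (φ x₀, φ x₀), ContDiffAt 𝕜 n f p := by
    have h := eventually_contDiffAt_writtenInExtChartAt
      ((eventually_mem_nhds_iff.2 hU).mono fun p hp ↦ hμ.contMDiffAt hp)
    rwa [extChartAt_prod, PartialEquiv.prod_coe] at h
  have hf_unitl : ∀ᶠ v in 𝓝 (φ x₀), f (φ x₀, v) = v := by
    have hsymm : Tendsto (fun v ↦ (x₀, φ.symm v)) (𝓝 (φ x₀)) (𝓝 (x₀, x₀)) := by
      simpa only [extChartAt_to_inv] using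
        (continuousAt_const.prodMk (continuousAt_extChartAt_symm x₀)).tendsto
    filter_upwards [hsymm hU, extChartAt_target_mem_nhds x₀] with v hv hvt
    rw [hf_apply, extChartAt_to_inv, hunitl _ hv, φ.right_inv hvt]
  have hinv : (fderiv 𝕜 f (φ x₀, φ x₀) ∘L .inr 𝕜 E E).IsInvertible := by
    rw [fderiv_comp_inr_eq_id (hf.self_of_nhds.differentiableAt (by simpa using hn)) hf_unitl]
    exact ⟨.refl 𝕜 E, rfl⟩
  set ψ := hf.self_of_nhds.implicitFunction hn hinv
  have hψ₀ : ψ (φ x₀) = φ x₀ := hf.self_of_nhds.implicitFunction_apply_self hn hinv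
  have hs := eventually_contMDiffAt_extChartAt_symm_comp
    (eventually_contDiffAt_implicitFunction hf hn hinv) hψ₀
  have hs₀ : (φ.symm ∘ ψ ∘ φ) x₀ = x₀ := by simp only [comp_apply, hψ₀, φ, extChartAt_to_inv]
  refine ⟨φ.symm ∘ ψ ∘ φ, hs₀, hs, ?_⟩
  have hs_cont : Tendsto (φ.symm ∘ ψ ∘ φ) (𝓝 x₀) (𝓝 x₀) := by
    have h := hs.self_of_nhds.continuousAt.tendsto
    rwa [hs₀] at h
  have hμs : Tendsto (fun x ↦ μ (x, φ.symm (ψ (φ x)))) (𝓝 x₀) (𝓝 x₀) :=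
    (hμ₀ ▸ (hμ.continuousOn.continuousAt hU).tendsto).comp (tendsto_id.prodMk_nhds hs_cont)
  have hsrc := extChartAt_source_mem_nhds (I := I) x₀
  filter_upwards [hsrc, hμs hsrc, (continuousAt_extChartAt x₀).tendsto.eventually
      (hf.self_of_nhds.eventually_apply_implicitFunction hn hinv)] with x hx hμx hfx
  refine φ.injOn hμx (mem_extChartAt_source x₀) ?_
  rwa [hf_apply, hf_apply, φ.left_inv hx, extChartAt_to_inv, hμ₀] at hfx

end RightInverse

/-- Let `(M, x₀, μ)` be a smooth partial monoid: `μ` is smooth on a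
neighbourhood `U` of `(x₀,x₀)`, unital at `x₀` and associative where defined.
Then `M` is group-like near `x₀`: there is a smooth map `s` on a
neighbourhood `V` of `x₀` with `μ(s(x),x) = μ(x,s(x)) = x₀` for `x ∈ V`. -/
theorem stmt_19 {E : Type*} [NormedAddCommGroup E] [NormedSpace ℝ E]
    [FiniteDimensional ℝ E]
    {H : Type*} [TopologicalSpace H] (I : ModelWithCorners ℝ E H)
    [I.Boundaryless]
    {M : Type*} [TopologicalSpace M] [ChartedSpace H M]
    [IsManifold I (⊤ : ℕ∞) M]
    (x₀ : M) (U : Set (M × M)) (hU : U ∈ nhds (x₀, x₀))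
    (μ : M × M → M)
    (hμ : ContMDiffOn (I.prod I) I (⊤ : ℕ∞) μ U)
    (hunitl : ∀ x : M, (x₀, x) ∈ U → μ (x₀, x) = x)
    (hunitr : ∀ x : M, (x, x₀) ∈ U → μ (x, x₀) = x)
    (hassoc : ∀ x y z : M, (x, y) ∈ U → (y, z) ∈ U →
      (μ (x, y), z) ∈ U → (x, μ (y, z)) ∈ U →
      μ (μ (x, y), z) = μ (x, μ (y, z))) :
    ∃ V ∈ nhds x₀, ∃ s : M → M, ContMDiffOn I I (⊤ : ℕ∞) s V ∧
      ∀ x ∈ V, (s x, x) ∈ U ∧ (x, s x) ∈ U ∧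
        μ (s x, x) = x₀ ∧ μ (x, s x) = x₀ := by
  obtain ⟨s, hs₀, hs, hright⟩ := exists_contMDiffAt_right_inverse hU hμ (by simp) hunitl
  have hs_cont : Tendsto s (𝓝 x₀) (𝓝 x₀) := by
    simpa only [hs₀] using hs.self_of_nhds.continuousAt.tendsto
  have hleft := eventually_left_inverse_of_right_inverse hU (hμ.continuousOn.continuousAt hU)
    (hunitl x₀ (mem_of_mem_nhds hU)) hunitr hassoc hs_cont hright
  refine ⟨{x | ContMDiffAt I I (⊤ : ℕ∞) s x ∧ (s x, x) ∈ U ∧ (x, s x) ∈ U ∧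
    μ (s x, x) = x₀ ∧ μ (x, s x) = x₀}, ?_, s, fun x hx ↦ hx.1.contMDiffWithinAt,
    fun x hx ↦ hx.2⟩
  filter_upwards [hs, hleft, hright] with x hsx ⟨hsxU, hxsU, hsxx⟩ hxsx
  exact ⟨hsx, hsxU, hxsU, hsxx, hxsx⟩
end
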